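/- Corollary to the uncertainty principle: Let U be an n×n unitary matrix with |U_{i,j}| ≤ c/√n for all i,j. For any unit vector v ∈ ℂ^n and subsets S, T with |S|·|T| ≤ n/(2c²), we have max(‖v_{S̄}‖, ‖(Uv)_{T̄}‖) ≥ 1/5. -/

import Mathlib

open Matrix

/-- Coordinate projection of `x` onto the set `S` (entries outside `S` set to `0`). -/
noncomputable def projE {n : ℕ} (S : Finset (Fin n)) (x : EuclideanSpace ℂ (Fin n)) :
    EuclideanSpace ℂ (Fin n) :=
  (WithLp.equiv 2 _).symm fun i => if i ∈ S then x i else 0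

/-- Matrix-vector multiplication, as a map of Euclidean spaces. -/
noncomputable def mulVecE {n : ℕ} (U : Matrix (Fin n) (Fin n) ℂ)
    (v : EuclideanSpace ℂ (Fin n)) : EuclideanSpace ℂ (Fin n) :=
  (WithLp.equiv 2 _).symm (U.mulVec (WithLp.equiv 2 _ v))

/-!
If `x` is supported on `S`, each coordinate of `U x` is at most `(c / √n) ∑_{j ∈ S} |x_j|`, so by
Cauchy–Schwarz `‖(U x)_T‖² ≤ c² |S| |T| / n · ‖x‖² ≤ ‖x‖² / 2`. If both tails `‖v_S̄‖` and
`‖(U v)_T̄‖` were below `1/5`, then splitting `v = v_S + v_S̄` would give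
`√(24/25) < ‖(U v)_T‖ ≤ 1/√2 + 1/5`, which is false.
-/

open Finset

section
variable {n : ℕ}

lemma projE_apply (S : Finset (Fin n)) (x : EuclideanSpace ℂ (Fin n)) (i : Fin n) :
    projE S x i = if i ∈ S then x i else 0 := rfl

lemma projE_add (S : Finset (Fin n)) (x y : EuclideanSpace ℂ (Fin n)) :
    projE S (x + y) = projE S x + projE S y := by
  ext i
  by_cases h : i ∈ S <;> simp [projE_apply, h]

lemma projE_add_projE_compl (S : Finset (Fin n)) (x : EuclideanSpace ℂ (Fin n)) :
    projE S x + projE Sᶜ x = x := by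
  ext i
  by_cases h : i ∈ S <;> simp [projE_apply, h]

lemma norm_projE_sq (S : Finset (Fin n)) (x : EuclideanSpace ℂ (Fin n)) :
    ‖projE S x‖ ^ 2 = ∑ i ∈ S, ‖x i‖ ^ 2 := by
  simp [EuclideanSpace.norm_sq_eq, projE_apply, apply_ite, sum_ite_mem]

lemma norm_projE_sq_add_norm_projE_compl_sq (S : Finset (Fin n))
    (x : EuclideanSpace ℂ (Fin n)) : ‖projE S x‖ ^ 2 + ‖projE Sᶜ x‖ ^ 2 = ‖x‖ ^ 2 := by
  rw [norm_projE_sq, norm_projE_sq, sum_add_sum_compl, EuclideanSpace.norm_sq_eq]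

lemma norm_projE_le (S : Finset (Fin n)) (x : EuclideanSpace ℂ (Fin n)) :
    ‖projE S x‖ ≤ ‖x‖ := by
  refine le_of_sq_le_sq ?_ (norm_nonneg x)
  rw [← norm_projE_sq_add_norm_projE_compl_sq S x]
  exact le_add_of_nonneg_right (sq_nonneg _)

lemma mulVecE_apply (U : Matrix (Fin n) (Fin n) ℂ) (v : EuclideanSpace ℂ (Fin n)) (i : Fin n) :
    mulVecE U v i = ∑ j, U i j * v j := rfl

lemma mulVecE_eq_toEuclideanCLM (U : Matrix (Fin n) (Fin n) ℂ) (v : EuclideanSpace ℂ (Fin n)) :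
    mulVecE U v = toEuclideanCLM (𝕜 := ℂ) U v := rfl

lemma mulVecE_add (U : Matrix (Fin n) (Fin n) ℂ) (x y : EuclideanSpace ℂ (Fin n)) :
    mulVecE U (x + y) = mulVecE U x + mulVecE U y := by
  simp only [mulVecE_eq_toEuclideanCLM, map_add]

lemma norm_mulVecE_of_mem_unitaryGroup {U : Matrix (Fin n) (Fin n) ℂ}
    (hU : U ∈ unitaryGroup (Fin n) ℂ) (v : EuclideanSpace ℂ (Fin n)) : ‖mulVecE U v‖ = ‖v‖ :=
  ContinuousLinearMap.norm_map_of_mem_unitary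
    (Unitary.map_mem (toEuclideanCLM (n := Fin n) (𝕜 := ℂ)) hU) v

lemma norm_mulVecE_projE_apply_sq_le {U : Matrix (Fin n) (Fin n) ℂ} {M : ℝ}
    (hU : ∀ i j, ‖U i j‖ ≤ M) (S : Finset (Fin n)) (x : EuclideanSpace ℂ (Fin n)) (i : Fin n) :
    ‖mulVecE U (projE S x) i‖ ^ 2 ≤ M ^ 2 * #S * ‖projE S x‖ ^ 2 := by
  have hrow : ‖mulVecE U (projE S x) i‖ ≤ M * ∑ j ∈ S, ‖x j‖ :=
    calc ‖mulVecE U (projE S x) i‖ = ‖∑ j ∈ S, U i j * x j‖ := by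
          simp [mulVecE_apply, projE_apply, sum_ite_mem]
      _ ≤ ∑ j ∈ S, ‖U i j‖ * ‖x j‖ := norm_sum_le_of_le _ fun j _ => (norm_mul _ _).le
      _ ≤ M * ∑ j ∈ S, ‖x j‖ := by
          rw [mul_sum]
          exact sum_le_sum fun j _ => mul_le_mul_of_nonneg_right (hU i j) (norm_nonneg _)
  calc ‖mulVecE U (projE S x) i‖ ^ 2 ≤ M ^ 2 * (∑ j ∈ S, ‖x j‖) ^ 2 := by
        rw [← mul_pow]; exact pow_le_pow_left₀ (norm_nonneg _) hrow 2
    _ ≤ M ^ 2 * (#S * ∑ j ∈ S, ‖x j‖ ^ 2) := by gcongr; exact sq_sum_le_card_mul_sum_sq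
    _ = M ^ 2 * #S * ‖projE S x‖ ^ 2 := by rw [norm_projE_sq]; ring

theorem norm_projE_mulVecE_projE_sq_le {U : Matrix (Fin n) (Fin n) ℂ} {M : ℝ}
    (hU : ∀ i j, ‖U i j‖ ≤ M) (S T : Finset (Fin n)) (x : EuclideanSpace ℂ (Fin n)) :
    ‖projE T (mulVecE U (projE S x))‖ ^ 2 ≤ M ^ 2 * (#S * #T) * ‖projE S x‖ ^ 2 :=
  calc ‖projE T (mulVecE U (projE S x))‖ ^ 2
      ≤ ∑ _i ∈ T, M ^ 2 * #S * ‖projE S x‖ ^ 2 := by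
        rw [norm_projE_sq]; exact sum_le_sum fun i _ => norm_mulVecE_projE_apply_sq_le hU S x i
    _ = M ^ 2 * (#S * #T) * ‖projE S x‖ ^ 2 := by rw [sum_const, nsmul_eq_mul]; ring

end

theorem stmt5 (n : ℕ) (U : Matrix (Fin n) (Fin n) ℂ)
    (hU : U ∈ Matrix.unitaryGroup (Fin n) ℂ) (c : ℝ) (hc : 0 < c)
    (hent : ∀ i j, ‖U i j‖ ≤ c / Real.sqrt n)
    (S T : Finset (Fin n)) (hST : (S.card * T.card : ℝ) ≤ n / (2 * c ^ 2))
    (v : EuclideanSpace ℂ (Fin n)) (hv : ‖v‖ = 1) :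
    max ‖projE Sᶜ v‖ ‖projE Tᶜ (mulVecE U v)‖ ≥ 1 / 5 := by
  by_contra! hsmall
  obtain ⟨hSc, hTc⟩ := max_lt_iff.1 hsmall
  set w := mulVecE U v
  have hw : ‖projE T w‖ ^ 2 + ‖projE Tᶜ w‖ ^ 2 = 1 := by
    rw [norm_projE_sq_add_norm_projE_compl_sq, norm_mulVecE_of_mem_unitaryGroup hU, hv, one_pow]
  have hwT : ‖projE T w‖ ≤ ‖projE T (mulVecE U (projE S v))‖ + ‖projE Sᶜ v‖ :=
    calc ‖projE T w‖ = ‖projE T (mulVecE U (projE S v)) + projE T (mulVecE U (projE Sᶜ v))‖ := by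
          rw [← projE_add, ← mulVecE_add, projE_add_projE_compl]
      _ ≤ _ := norm_add_le _ _
      _ ≤ _ := add_le_add_right ((norm_projE_le T _).trans
          (norm_mulVecE_of_mem_unitaryGroup hU _).le) _
  have hcST : (c / Real.sqrt n) ^ 2 * (#S * #T) ≤ 1 / 2 := by
    rw [le_div_iff₀ (by positivity)] at hST
    rw [div_pow, Real.sq_sqrt n.cast_nonneg, div_mul_eq_mul_div]
    exact div_le_of_le_mul₀ n.cast_nonneg (by norm_num) (by linarith)
  have hcore : ‖projE T (mulVecE U (projE S v))‖ ^ 2 ≤ 1 / 2 :=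
    calc _ ≤ (c / Real.sqrt n) ^ 2 * (#S * #T) * ‖projE S v‖ ^ 2 :=
          norm_projE_mulVecE_projE_sq_le hent S T v
      _ ≤ 1 / 2 * 1 ^ 2 := by
          gcongr
          exact hv ▸ norm_projE_le S v
      _ = 1 / 2 := by norm_num
  have hTw : 24 / 25 < ‖projE T w‖ ^ 2 := by nlinarith [norm_nonneg (projE Tᶜ w)]
  have hcore_lt : ‖projE T (mulVecE U (projE S v))‖ < 3 / 4 := by nlinarith
  nlinarith [pow_le_pow_left₀ (norm_nonneg _) hwT 2, norm_nonneg (projE Sᶜ v)]
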